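/- arXiv:math/9802017 — 7 statements merged into one kernel-verified Lean document; each statement's English description precedes it below -/
import Mathlib

section
/- Let G be a finite group and φ : G → G an endomorphism. Then R(φ) equals the number of ordinary conjugacy classes ⟨x⟩ in G such that ⟨φ(x)⟩ = ⟨x⟩, i.e. the number of conjugacy classes C of G for which the conjugacy class of φ(x) equals C for every (equivalently, some) x ∈ C. -/
/-- Two elements `a`, `b` of a group are `φ`-conjugate if `b = γ * a * (φ γ)⁻¹` for some `γ`. -/
def phiConj {G : Type*} [Group G] (φ : G → G) (a b : G) : Prop :=
  ∃ γ : G, b = γ * a * (φ γ)⁻¹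

/-- The Reidemeister number of `φ`: the number of `φ`-conjugacy classes
(`0` if there are infinitely many). -/
noncomputable def reidemeisterNumber {G : Type*} [Group G] (φ : G → G) : ℕ :=
  Nat.card (Quot (phiConj φ))

section Aux

variable {G : Type*} [Group G]

lemma phiConj_comm (φ : G →* G) (a b : G) : phiConj ⇑φ a b ↔ phiConj ⇑φ b a := by
  constructor <;> rintro ⟨γ, rfl⟩ <;> exact ⟨γ⁻¹, by simp [mul_assoc]⟩

/-- Type alias for `G`, on which `G` acts by `φ`-twisted conjugation. -/
def TwistG {G : Type*} [Group G] (_φ : G →* G) : Type _ := G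

/-- Reinterpret an element of `G` as an element of `TwistG φ`. -/
def TwistG.mk (φ : G →* G) : G ≃ TwistG φ :=
  ⟨id, id, fun _ => rfl, fun _ => rfl⟩

instance (φ : G →* G) : MulAction G (TwistG φ) where
  smul g x := TwistG.mk φ (g * (TwistG.mk φ).symm x * (φ g)⁻¹)
  one_smul x := by
    show TwistG.mk φ (1 * (TwistG.mk φ).symm x * (φ 1)⁻¹) = x
    simp
  mul_smul g h x := by
    show TwistG.mk φ ((g * h) * (TwistG.mk φ).symm x * (φ (g * h))⁻¹)
        = TwistG.mk φ (g * (TwistG.mk φ).symm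
            (TwistG.mk φ (h * (TwistG.mk φ).symm x * (φ h)⁻¹)) * (φ g)⁻¹)
    simp [mul_assoc]

lemma TwistG.smul_def (φ : G →* G) (g : G) (x : TwistG φ) :
    g • x = TwistG.mk φ (g * (TwistG.mk φ).symm x * (φ g)⁻¹) := rfl

end Aux

/-- for a finite group `G` and an endomorphism `φ`, the Reidemeister number
`R(φ)` is the number of ordinary conjugacy classes `⟨x⟩` with `⟨φ(x)⟩ = ⟨x⟩`. -/
theorem stmt1 {G : Type*} [Group G] [Finite G] (φ : G →* G) :
    reidemeisterNumber ⇑φ = Nat.card {c : ConjClasses G // ConjClasses.map φ c = c} := by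
  classical
  letI : Fintype G := Fintype.ofFinite G
  letI : Fintype (TwistG φ) := ‹Fintype G›
  -- Step 1: Reidemeister number = number of orbits of the twisted conjugation action
  have key : ∀ a b : G, phiConj ⇑φ a b ↔
      (MulAction.orbitRel G (TwistG φ)).r (TwistG.mk φ a) (TwistG.mk φ b) := by
    intro a b
    rw [phiConj_comm]
    show (∃ γ, a = γ * b * (φ γ)⁻¹) ↔
      TwistG.mk φ a ∈ MulAction.orbit G (TwistG.mk φ b)
    rw [MulAction.mem_orbit_iff]
    constructor
    · rintro ⟨γ, rfl⟩
      exact ⟨γ, by rw [TwistG.smul_def]; simp⟩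
    · rintro ⟨γ, hγ⟩
      refine ⟨γ, ?_⟩
      rw [TwistG.smul_def] at hγ
      simpa using ((TwistG.mk φ).apply_eq_iff_eq_symm_apply.mp hγ).symm
  have e : Quot (phiConj ⇑φ) ≃ Quotient (MulAction.orbitRel G (TwistG φ)) :=
    Quot.congr (TwistG.mk φ) key
  have h1 : reidemeisterNumber ⇑φ
      = Fintype.card (Quotient (MulAction.orbitRel G (TwistG φ))) := by
    rw [reidemeisterNumber, Nat.card_congr e, Nat.card_eq_fintype_card]
  -- Step 2: Burnside's lemma
  have burn := MulAction.sum_card_fixedBy_eq_card_orbits_mul_card_group G (TwistG φ)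
  -- Step 3: the number of fixed points of each `g`
  have hfix : ∀ g : G, Fintype.card (MulAction.fixedBy (TwistG φ) g)
      = if ConjClasses.map φ (ConjClasses.mk g) = ConjClasses.mk g
          then Fintype.card (MulAction.stabilizer (ConjAct G) g) else 0 := by
    intro g
    have e1 : MulAction.fixedBy (TwistG φ) g ≃ {u : ConjAct G // u • (φ g) = g} := by
      refine Equiv.subtypeEquiv ((TwistG.mk φ).symm.trans ConjAct.toConjAct.toEquiv) ?_
      intro x
      show g • x = x ↔ _
      rw [TwistG.smul_def, ConjAct.smul_def, (TwistG.mk φ).apply_eq_iff_eq_symm_apply]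
      simp only [Equiv.trans_apply, MulEquiv.toEquiv_eq_coe, EquivLike.coe_coe,
        ConjAct.ofConjAct_toConjAct]
      rw [mul_inv_eq_iff_eq_mul, mul_inv_eq_iff_eq_mul]
      exact eq_comm
    rw [Fintype.card_congr e1]
    have hcond : (ConjClasses.map φ (ConjClasses.mk g) = ConjClasses.mk g)
        ↔ IsConj g (φ g) := by
      show ConjClasses.mk (φ g) = ConjClasses.mk g ↔ _
      rw [ConjClasses.mk_eq_mk_iff_isConj, isConj_comm]
    by_cases h : IsConj g (φ g)
    · rw [if_pos (hcond.mpr h)]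
      have : g ∈ MulAction.orbit (ConjAct G) (φ g) := ConjAct.mem_orbit_conjAct.mpr h
      obtain ⟨u₀, hu₀⟩ := this
      change u₀ • φ g = g at hu₀
      have hinv : u₀⁻¹ • g = φ g := by rw [inv_smul_eq_iff, hu₀]
      refine Fintype.card_congr ⟨fun u => ⟨u.1 * u₀⁻¹, ?_⟩, fun v => ⟨v.1 * u₀, ?_⟩, ?_, ?_⟩
      · rw [MulAction.mem_stabilizer_iff, mul_smul, hinv, u.2]
      · rw [mul_smul, hu₀]
        exact v.2
      · intro u; ext; simp [mul_assoc]
      · intro v; ext; simp [mul_assoc]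
    · rw [if_neg (fun hc => h (hcond.mp hc))]
      rw [Fintype.card_eq_zero_iff]
      refine ⟨fun u => h ?_⟩
      exact ConjAct.mem_orbit_conjAct.mp ⟨u.1, u.2⟩
  -- Step 4: regroup the Burnside sum over conjugacy classes
  have regroup : (∑ g : G, Fintype.card (MulAction.fixedBy (TwistG φ) g))
      = ∑ c : ConjClasses G,
          if ConjClasses.map φ c = c then Fintype.card G else 0 := by
    rw [← Fintype.sum_fiberwise (ConjClasses.mk (α := G))
      (fun g => Fintype.card (MulAction.fixedBy (TwistG φ) g))]
    refine Finset.sum_congr rfl fun c _ => ?_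
    obtain ⟨g₀, hg₀⟩ := ConjClasses.exists_rep c
    by_cases hc : ConjClasses.map φ c = c
    · rw [if_pos hc]
      have hterm : ∀ g : {g : G // ConjClasses.mk g = c},
          Fintype.card (MulAction.fixedBy (TwistG φ) (g : G))
            = Fintype.card (MulAction.stabilizer (ConjAct G) g₀) := by
        rintro ⟨g, hg⟩
        rw [hfix g, if_pos (by rw [hg, hc])]
        have horb : (MulAction.orbitRel (ConjAct G) G).r g g₀ := by
          show g ∈ MulAction.orbit (ConjAct G) g₀
          rw [ConjAct.mem_orbit_conjAct, ← ConjClasses.mk_eq_mk_iff_isConj, hg, hg₀]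
        exact Fintype.card_congr
          (MulAction.stabilizerEquivStabilizerOfOrbitRel horb).toEquiv
      rw [Finset.sum_congr rfl (fun g _ => hterm g), Finset.sum_const, Finset.card_univ,
        smul_eq_mul]
      have hfib : Fintype.card {g : G // ConjClasses.mk g = c}
          = Fintype.card (MulAction.orbit (ConjAct G) g₀) := by
        refine Fintype.card_congr (Equiv.subtypeEquivRight fun g => ?_).symm
        rw [← hg₀]
        show g ∈ MulAction.orbit (ConjAct G) g₀ ↔ _
        rw [ConjAct.mem_orbit_conjAct, ← ConjClasses.mk_eq_mk_iff_isConj]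
      rw [hfib, MulAction.card_orbit_mul_card_stabilizer_eq_card_group (ConjAct G) g₀]
      rfl
    · rw [if_neg hc]
      refine Finset.sum_eq_zero fun g _ => ?_
      rw [hfix, if_neg (by rw [g.2]; exact hc)]
  -- Step 5: count the fixed conjugacy classes
  have count : (∑ c : ConjClasses G,
      if ConjClasses.map φ c = c then Fintype.card G else 0)
      = Fintype.card {c : ConjClasses G // ConjClasses.map φ c = c} * Fintype.card G := by
    rw [← Finset.sum_filter, Finset.sum_const, smul_eq_mul, Fintype.card_subtype]
  -- Put everything together
  rw [h1, Nat.card_eq_fintype_card]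
  have hpos : 0 < Fintype.card G := Fintype.card_pos
  have : Fintype.card (Quotient (MulAction.orbitRel G (TwistG φ))) * Fintype.card G
      = Fintype.card {c : ConjClasses G // ConjClasses.map φ c = c} * Fintype.card G := by
    rw [← burn, regroup, count]
  exact Nat.eq_of_mul_eq_mul_right hpos this
end

section
/- Let G be a finite group and φ : G → G an endomorphism. Let W be the complex vector space of class functions on G (functions G → ℂ constant on ordinary conjugacy classes), and let B : W → W be the linear map B(f) = f ∘ φ. Then R(φ) = Tr(B). -/
/-- The complex vector space of class functions on a group: functions `G → ℂ`
constant on ordinary conjugacy classes. -/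
noncomputable def classFunctions (G : Type*) [Group G] : Submodule ℂ (G → ℂ) where
  carrier := {f | ∀ a b : G, IsConj a b → f a = f b}
  add_mem' := fun hf hg a b h => by simp only [Pi.add_apply, hf a b h, hg a b h]
  zero_mem' := fun _ _ _ => rfl
  smul_mem' := fun c f hf a b h => by simp only [Pi.smul_apply, hf a b h]

/-- The linear map `B : W → W`, `B(f) = f ∘ φ`, on class functions induced by an
endomorphism `φ`. -/
noncomputable def pullbackMap {G : Type*} [Group G] (φ : G →* G) :
    classFunctions G →ₗ[ℂ] classFunctions G where
  toFun f := ⟨fun g => (f : G → ℂ) (φ g), fun a b h => f.2 _ _ (φ.map_isConj h)⟩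
  map_add' _ _ := rfl
  map_smul' _ _ := rfl

/-!
Identifying class functions with functions on `ConjClasses G`, the map `B` becomes pullback along
the induced map `ConjClasses.map φ`, whose matrix is a 0/1 matrix with trace the number of
`φ`-fixed conjugacy classes.

On the other side, `φ`-conjugacy classes are the orbits of the twisted action
`g • x = g * x * (φ g)⁻¹`, so by Burnside `R(φ) * |G|` counts the pairs `(g, x)` with
`x⁻¹ * g * x = φ g`. For fixed `g` these `x` form a coset of the centralizer of `g` if `g` and
`φ g` are conjugate, and there are none otherwise; since the centralizer orders summed over a
conjugacy class give `|G|`, the count is `|G|` times the number of `φ`-fixed classes.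
-/

open MulAction Finset

theorem LinearMap.trace_funLeft {R X : Type*} [CommRing R] [Fintype X] (σ : X → X) :
    trace R (X → R) (funLeft R R σ) = Nat.card (Function.fixedPoints σ) := by
  classical
  rw [trace_eq_matrix_trace R (Pi.basisFun R X), Matrix.trace]
  simp [funLeft_apply, Pi.single_apply]
  rfl

def classFunctionsEquiv (G : Type*) [Group G] :
    classFunctions G ≃ₗ[ℂ] (ConjClasses G → ℂ) where
  toFun f := Quotient.lift (f : G → ℂ) f.2
  map_add' _ _ := funext fun c => Quotient.inductionOn' c fun _ => rfl
  map_smul' _ _ := funext fun c => Quotient.inductionOn' c fun _ => rfl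
  invFun f :=
    ⟨f ∘ ConjClasses.mk, fun _ _ h => congrArg f (ConjClasses.mk_eq_mk_iff_isConj.mpr h)⟩
  left_inv _ := rfl
  right_inv _ := funext fun c => Quotient.inductionOn' c fun _ => rfl

theorem classFunctionsEquiv_conj_pullbackMap {G : Type*} [Group G] (φ : G →* G) :
    (classFunctionsEquiv G).conj (pullbackMap φ) =
      LinearMap.funLeft ℂ ℂ (ConjClasses.map φ) := by
  ext f c
  exact Quotient.inductionOn' c fun _ => rfl

theorem trace_pullbackMap {G : Type*} [Group G] [Finite G] (φ : G →* G) :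
    LinearMap.trace ℂ (classFunctions G) (pullbackMap φ) =
      Nat.card (Function.fixedPoints (ConjClasses.map φ)) := by
  have := Fintype.ofFinite (ConjClasses G)
  rw [← LinearMap.trace_conj' _ (classFunctionsEquiv G), classFunctionsEquiv_conj_pullbackMap,
    LinearMap.trace_funLeft]

namespace MulAction

variable {α β : Type*} [Group α] [MulAction α β]

theorem card_smul_eq_of_mem_orbit {a b : β} (h : b ∈ orbit α a) :
    Nat.card {g : α // g • a = b} = Nat.card (stabilizer α a) := by
  obtain ⟨g₀, rfl⟩ := h
  refine Nat.card_congr (Equiv.subtypeEquiv (Equiv.mulLeft g₀⁻¹) fun g => ?_)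
  rw [Equiv.coe_mulLeft, mem_stabilizer_iff, mul_smul, inv_smul_eq_iff]

theorem card_smul_eq_of_notMem_orbit {a b : β} (h : b ∉ orbit α a) :
    Nat.card {g : α // g • a = b} = 0 :=
  have : IsEmpty {g : α // g • a = b} := ⟨fun g => h ⟨g, g.2⟩⟩
  Nat.card_of_isEmpty

theorem sum_card_stabilizer_orbit [Fintype β] (a : β) [DecidablePred (· ∈ orbit α a)] :
    ∑ b with b ∈ orbit α a, Nat.card (stabilizer α b) = Nat.card α := by
  have hconst : ∀ b ∈ ({b | b ∈ orbit α a} : Finset β),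
      Nat.card (stabilizer α b) = Nat.card (stabilizer α a) := fun b hb =>
    Nat.card_congr (stabilizerEquivStabilizerOfOrbitRel (mem_filter.mp hb).2).toEquiv
  have hcard : #{b | b ∈ orbit α a} = (orbit α a).ncard := by
    rw [← Set.ncard_coe_finset]
    simp
  rw [sum_congr rfl hconst, sum_const, smul_eq_mul, hcard, ← index_stabilizer, mul_comm,
    Subgroup.card_mul_index]

end MulAction

namespace ConjClasses

variable {G : Type*} [Group G]

theorem mk_mem_fixedPoints_map_iff {φ : G →* G} {g : G} :
    ConjClasses.mk g ∈ Function.fixedPoints (map φ) ↔ φ g ∈ orbit (ConjAct G) g := by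
  rw [ConjAct.mem_orbit_conjAct, ← mk_eq_mk_iff_isConj]
  rfl

variable [Fintype G] [DecidableEq (ConjClasses G)]

theorem sum_card_stabilizer_of_mk_eq (c : ConjClasses G) :
    ∑ g with ConjClasses.mk g = c, Nat.card (stabilizer (ConjAct G) g) = Nat.card G := by
  classical
  obtain ⟨g₀, rfl⟩ := ConjClasses.mk_surjective c
  simp_rw [mk_eq_mk_iff_isConj, ← ConjAct.mem_orbit_conjAct]
  exact sum_card_stabilizer_orbit g₀

theorem sum_card_stabilizer_of_mk_mem (T : Finset (ConjClasses G)) :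
    ∑ g with ConjClasses.mk g ∈ T, Nat.card (stabilizer (ConjAct G) g) = #T * Nat.card G := by
  rw [← sum_fiberwise_eq_sum_filter, sum_congr rfl fun c _ => sum_card_stabilizer_of_mk_eq c,
    sum_const, smul_eq_mul]

end ConjClasses

def TwistedConj {G : Type*} [Group G] (_φ : G →* G) : Type _ := G

namespace TwistedConj

variable {G : Type*} [Group G] {φ : G →* G}

def mk (φ : G →* G) : G ≃ TwistedConj φ := Equiv.refl G

instance : MulAction G (TwistedConj φ) where
  smul g x := mk φ (g * (mk φ).symm x * (φ g)⁻¹)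
  one_smul x := by
    show mk φ (1 * _ * (φ 1)⁻¹) = x
    simp
  mul_smul g h x := by
    show mk φ (g * h * _ * (φ (g * h))⁻¹) = mk φ (g * (h * _ * (φ h)⁻¹) * (φ g)⁻¹)
    simp [mul_assoc]

instance [Finite G] : Finite (TwistedConj φ) := inferInstanceAs (Finite G)

theorem smul_mk (g x : G) : g • mk φ x = mk φ (g * x * (φ g)⁻¹) := rfl

theorem card_fixedBy (g : G) :
    Nat.card (fixedBy (TwistedConj φ) g) = Nat.card {c : ConjAct G // c • g = φ g} := by
  refine Nat.card_congr <|
    Equiv.subtypeEquiv ((mk φ).symm.trans ((Equiv.inv G).trans ConjAct.toConjAct.toEquiv)) ?_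
  intro x
  obtain ⟨y, rfl⟩ := (mk φ).surjective x
  simp only [mem_fixedBy, smul_mk, Equiv.trans_apply, Equiv.symm_apply_apply, Equiv.inv_apply,
    MulEquiv.toEquiv_eq_coe, MulEquiv.coe_toEquiv, ConjAct.toConjAct_smul,
    EmbeddingLike.apply_eq_iff_eq]
  rw [inv_inv, mul_inv_eq_iff_eq_mul, mul_assoc, inv_mul_eq_iff_eq_mul]

end TwistedConj

theorem reidemeisterNumber_eq_card_orbits {G : Type*} [Group G] (φ : G →* G) :
    reidemeisterNumber φ = Nat.card (orbitRel.Quotient G (TwistedConj φ)) :=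
  Nat.card_congr <| Quot.congr (TwistedConj.mk φ) fun a b => by
    rw [Setoid.comm']
    exact exists_congr fun _ => eq_comm

theorem reidemeisterNumber_eq_card_fixedPoints {G : Type*} [Group G] [Finite G] (φ : G →* G) :
    reidemeisterNumber φ = Nat.card (Function.fixedPoints (ConjClasses.map φ)) := by
  classical
  have := Fintype.ofFinite G
  refine Nat.eq_of_mul_eq_mul_right (Nat.card_pos (α := G)) ?_
  calc reidemeisterNumber φ * Nat.card G
      = Nat.card (Σ g : G, fixedBy (TwistedConj φ) g) := by
        rw [reidemeisterNumber_eq_card_orbits, ← Nat.card_prod,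
          Nat.card_congr (sigmaFixedByEquivOrbitsProdGroup G _)]
    _ = ∑ g : G, Nat.card {c : ConjAct G // c • g = φ g} := by
        rw [Nat.card_sigma]
        exact sum_congr rfl fun g _ => TwistedConj.card_fixedBy g
    _ = ∑ g with ConjClasses.mk g ∈ (Function.fixedPoints (ConjClasses.map φ)).toFinset,
          Nat.card (stabilizer (ConjAct G) g) := by
        rw [sum_filter]
        refine sum_congr rfl fun g _ => ?_
        split_ifs with h <;> rw [Set.mem_toFinset, ConjClasses.mk_mem_fixedPoints_map_iff] at h
        · exact card_smul_eq_of_mem_orbit h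
        · exact card_smul_eq_of_notMem_orbit h
    _ = Nat.card (Function.fixedPoints (ConjClasses.map φ)) * Nat.card G := by
        rw [ConjClasses.sum_card_stabilizer_of_mk_mem, Set.toFinset_card,
          ← Nat.card_eq_fintype_card]

/-- for a finite group `G` and endomorphism `φ`, `R(φ) = Tr B` where
`B(f) = f ∘ φ` on the space of class functions. -/
theorem stmt2 {G : Type*} [Group G] [Finite G] (φ : G →* G) :
    (reidemeisterNumber ⇑φ : ℂ) = LinearMap.trace ℂ (classFunctions G) (pullbackMap φ) := by
  rw [trace_pullbackMap, reidemeisterNumber_eq_card_fixedPoints]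
end

section
/- Let M be a k×k integer matrix and φ : ℤ^k → ℤ^k the endomorphism v ↦ M·v. If det(I − M) ≠ 0 then R(φ) = |det(I − M)|. -/
theorem phiConj_toMultiplicative_iff {A : Type*} [AddCommGroup A] (f : A →+ A)
    (a b : Multiplicative A) :
    phiConj (AddMonoidHom.toMultiplicative f) a b ↔
      -a.toAdd + b.toAdd ∈ (AddMonoidHom.id A - f).range := by
  constructor
  · rintro ⟨γ, rfl⟩
    refine ⟨γ.toAdd, ?_⟩
    simp only [AddMonoidHom.sub_apply, AddMonoidHom.id_apply,
      AddMonoidHom.toMultiplicative_apply_apply, toAdd_mul, toAdd_inv, toAdd_ofAdd]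
    abel
  · rintro ⟨v, hv⟩
    refine ⟨Multiplicative.ofAdd v, Multiplicative.toAdd.injective ?_⟩
    have hb : b.toAdd = a.toAdd + (v - f v) := by
      rw [show v - f v = -a.toAdd + b.toAdd from hv]
      abel
    simp only [hb, AddMonoidHom.toMultiplicative_apply_apply, toAdd_ofAdd, toAdd_mul, toAdd_inv]
    abel

theorem reidemeisterNumber_toMultiplicative {A : Type*} [AddCommGroup A] (f : A →+ A) :
    reidemeisterNumber (AddMonoidHom.toMultiplicative f) = (AddMonoidHom.id A - f).range.index :=
  Nat.card_congr <| Quot.congr Multiplicative.toAdd fun a b =>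
    (phiConj_toMultiplicative_iff f a b).trans QuotientAddGroup.leftRel_apply.symm

theorem LinearMap.index_range_eq_natAbs_det {M : Type*} [AddCommGroup M] [Module.Free ℤ M]
    [Module.Finite ℤ M] (f : M →ₗ[ℤ] M) (hf : Function.Injective f) :
    (LinearMap.range f).toAddSubgroup.index = (LinearMap.det f).natAbs := by
  have h := Submodule.natAbs_det_equiv (LinearMap.range f) (LinearEquiv.ofInjective f hf)
  rw [show (LinearMap.range f).subtype ∘ₗ _ = f from LinearMap.ext fun _ => rfl] at h
  exact h.symm

/-- for the endomorphism `v ↦ M·v` of `ℤ^k` with `det(I - M) ≠ 0`,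
`R(φ) = |det(I - M)|`.  (The free abelian group `ℤ^k` is written multiplicatively as
`Multiplicative (Fin k → ℤ)`.) -/
theorem stmt4 (k : ℕ) (M : Matrix (Fin k) (Fin k) ℤ)
    (φ : Multiplicative (Fin k → ℤ) →* Multiplicative (Fin k → ℤ))
    (hφ : ∀ v : Fin k → ℤ, φ (Multiplicative.ofAdd v) = Multiplicative.ofAdd (M.mulVec v))
    (hdet : (1 - M).det ≠ 0) :
    reidemeisterNumber ⇑φ = (1 - M).det.natAbs := by
  have hφM : φ = AddMonoidHom.toMultiplicative (Matrix.toLin' M).toAddMonoidHom :=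
    MonoidHom.ext fun v => hφ v.toAdd
  have hrange : (AddMonoidHom.id _ - (Matrix.toLin' M).toAddMonoidHom).range =
      (LinearMap.range (Matrix.toLin' (1 - M))).toAddSubgroup := by
    ext v
    simp
  rw [hφM, reidemeisterNumber_toMultiplicative, hrange,
    LinearMap.index_range_eq_natAbs_det _ (Matrix.mulVec_injective_of_det_ne_zero hdet),
    LinearMap.det_toLin']
end

section
/- Let M be a k×k integer matrix with det(I − M) ≠ 0. Let p be the number of real eigenvalues μ of M (counted with algebraic multiplicity) with μ < −1, and r the number of real eigenvalues of M (with multiplicity) whose absolute value is > 1. Then |det(I − M)| = (−1)^{r+p} · Σ_{i=0}^{k} (−1)^i Tr(Λ^i M), where Λ^i M denotes the induced map on the i-th exterior power. -/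
/-!
Summing the coefficients of the characteristic polynomial `χ` of `M`, which are signed sums of
principal minors, gives `det (1 - M) = χ(1) = ∑ᵢ (-1)ⁱ tr Λⁱ M`.

For the sign, split the real characteristic polynomial as `χ = ∏ (X - μ) * q` over its real roots
`μ`, with `q` monic and without real roots, hence `q(1) > 0`. Then `χ(1)` has the sign of
`∏ (1 - μ)`, namely `(-1)^c` with `c = #{μ > 1}`, and `r + p = c + 2p`.
-/

/-- The `i`-th exterior power (compound matrix) of a `k×k` matrix `M`: the matrix of the induced
map on the `i`-th exterior power, with entries the `i×i` minors of `M` indexed by cardinality-`i`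
subsets (listed in increasing order). -/
noncomputable def extPow {k : ℕ} {R : Type*} [CommRing R] (M : Matrix (Fin k) (Fin k) R)
    (i : ℕ) :
    Matrix {s : Finset (Fin k) // s.card = i} {s : Finset (Fin k) // s.card = i} R :=
  fun s t => (Matrix.of fun a b : Fin i =>
    M (s.1.orderIsoOfFin s.2 a) (t.1.orderIsoOfFin t.2 b)).det

open Polynomial Finset

section ExteriorPowers

variable {R : Type*} [CommRing R]

theorem Matrix.det_one_sub_eq_sum_minors {n : Type*} [Fintype n] [DecidableEq n]
    (M : Matrix n n R) :
    (1 - M).det = ∑ i ∈ range (Fintype.card n + 1), (-1) ^ i *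
      ∑ s ∈ univ.powersetCard i, (M.submatrix (Subtype.val : s → n) Subtype.val).det := by
  nontriviality R
  rw [← map_one (Matrix.scalar n), ← Matrix.eval_charpoly, eval_eq_sum_range,
    Matrix.charpoly_natDegree_eq_dim, ← sum_range_reflect]
  refine sum_congr rfl fun i hi => ?_
  rw [one_pow, mul_one, add_tsub_cancel_right,
    Matrix.charpoly_coeff_eq_sum_minors M i (Nat.lt_succ_iff.mp (mem_range.mp hi))]

theorem trace_extPow {k : ℕ} (M : Matrix (Fin k) (Fin k) R) (i : ℕ) :
    (extPow M i).trace =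
      ∑ s ∈ univ.powersetCard i, (M.submatrix (Subtype.val : s → Fin k) Subtype.val).det := by
  rw [sum_subtype _ (fun s => by rw [mem_powersetCard_univ])]
  exact sum_congr rfl fun s _ => Matrix.det_submatrix_equiv_self
    (s.1.orderIsoOfFin s.2).toEquiv (M.submatrix (Subtype.val : s.1 → Fin k) Subtype.val)

theorem det_one_sub_eq_sum_trace_extPow {k : ℕ} (M : Matrix (Fin k) (Fin k) R) :
    (1 - M).det = ∑ i ∈ range (k + 1), (-1) ^ i * (extPow M i).trace := by
  simp only [trace_extPow, M.det_one_sub_eq_sum_minors, Fintype.card_fin]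

end ExteriorPowers

theorem Multiset.zero_lt_negOnePow_mul_prod_sub {α : Type*} [CommRing α] [LinearOrder α]
    [IsStrictOrderedRing α] (t : Multiset α) {x : α} (hx : x ∉ t) :
    0 < (-1) ^ (t.filter (x < ·)).card * (t.map (x - ·)).prod := by
  induction t using Multiset.induction with
  | empty => simp
  | cons a t ih =>
    rw [Multiset.mem_cons, not_or] at hx
    have ih := ih hx.2
    rw [Multiset.map_cons, Multiset.prod_cons]
    rcases lt_or_gt_of_ne hx.1 with hxa | hax
    · rw [Multiset.filter_cons_of_pos _ hxa, Multiset.card_cons, pow_succ]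
      nlinarith
    · rw [Multiset.filter_cons_of_neg _ hax.not_gt]
      nlinarith

theorem Polynomial.Monic.zero_lt_negOnePow_mul_eval {P : ℝ[X]} (hP : P.Monic) {x : ℝ}
    (hx : ¬ P.IsRoot x) : 0 < (-1) ^ (P.roots.filter (x < ·)).card * P.eval x := by
  obtain ⟨q, hPq, -, hq⟩ := P.exists_prod_multiset_X_sub_C_mul
  have hq_monic : q.Monic := (monic_multisetProd_X_sub_C _).of_mul_monic_left (hPq ▸ hP)
  have hq_pos : 0 < q.eval x :=
    zero_lt_eval_of_roots_lt_of_leadingCoeff_nonneg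
      (fun y hy => absurd ((mem_roots hq_monic.ne_zero).mpr hy) (by simp [hq]))
      (hq_monic.leadingCoeff ▸ zero_le_one)
  have hP_eval : P.eval x = (P.roots.map (x - ·)).prod * q.eval x := by
    conv_lhs => rw [← hPq]
    simp [eval_multiset_prod]
  rw [hP_eval, ← mul_assoc]
  exact mul_pos (P.roots.zero_lt_negOnePow_mul_prod_sub fun h => hx (isRoot_of_mem_roots h))
    hq_pos

theorem Multiset.card_filter_lt_abs {α : Type*} [AddCommGroup α] [LinearOrder α]
    [IsOrderedAddMonoid α] (t : Multiset α) {a : α} (ha : 0 ≤ a) :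
    (t.filter (fun μ => a < |μ|)).card =
      (t.filter (fun μ => a < μ)).card + (t.filter (fun μ => μ < -a)).card := by
  have h_disjoint : t.filter (fun μ => a < μ ∧ μ < -a) = 0 :=
    Multiset.filter_eq_nil.mpr fun _ _ h => (h.1.trans h.2).not_ge (neg_le_self ha)
  rw [← Multiset.card_add, Multiset.filter_add_filter, h_disjoint, add_zero]
  simp only [lt_abs, lt_neg]

/-- for a `k×k` integer matrix `M` with `det(I - M) ≠ 0`, letting `p` be the number
of real eigenvalues `μ < -1` and `r` the number of real eigenvalues with `|μ| > 1` (both counted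
with algebraic multiplicity, i.e. as roots of the real characteristic polynomial),
`|det(I - M)| = (-1)^(r+p) * ∑_{i=0}^{k} (-1)^i Tr(Λ^i M)`. -/
theorem stmt7 (k : ℕ) (M : Matrix (Fin k) (Fin k) ℤ) (hdet : (1 - M).det ≠ 0)
    (p r : ℕ)
    (hp : p = (((M.map (Int.cast : ℤ → ℝ)).charpoly.roots).filter (fun μ => μ < -1)).card)
    (hr : r = (((M.map (Int.cast : ℤ → ℝ)).charpoly.roots).filter (fun μ => 1 < |μ|)).card) :
    ((1 - M).det.natAbs : ℤ) =
      (-1) ^ (r + p) * ∑ i ∈ Finset.range (k + 1), (-1) ^ i * (extPow M i).trace := by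
  set A := M.map (Int.cast : ℤ → ℝ)
  set c := (A.charpoly.roots.filter (fun μ => 1 < μ)).card
  have hA_eval : A.charpoly.eval 1 = ((1 - M).det : ℝ) := by
    rw [show A = M.map (Int.castRingHom ℝ) from rfl, Matrix.charpoly_map, eval_one_map,
      Matrix.eval_charpoly, map_one, eq_intCast]
  have hsign : 0 < (-1 : ℤ) ^ c * (1 - M).det := by
    have h := A.charpoly_monic.zero_lt_negOnePow_mul_eval (x := 1)
      (by rw [IsRoot.def, hA_eval]; exact_mod_cast hdet)
    rw [hA_eval] at h
    exact_mod_cast h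
  have hparity : (-1 : ℤ) ^ (r + p) = (-1) ^ c := by
    rw [hr, hp, Multiset.card_filter_lt_abs _ zero_le_one, add_assoc, ← two_mul, pow_add,
      pow_mul, neg_one_sq, one_pow, mul_one]
  rw [← det_one_sub_eq_sum_trace_extPow, hparity, Int.natCast_natAbs, ← abs_of_pos hsign,
    abs_mul, abs_neg_one_pow, one_mul]
end

section
/- Let φ : G → G be an endomorphism of a group G, and let H be a subgroup of G such that φ(H) ⊆ H and for every x ∈ G there exists n ∈ ℕ with φⁿ(x) ∈ H. Let φ_H : H → H denote the restriction of φ. Then the map sending the φ_H-conjugacy class of x ∈ H to the φ-conjugacy class of x in G is a bijection from the set of φ_H-conjugacy classes of H to the set of φ-conjugacy classes of G; in particular R(φ) = R(φ_H). -/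
section Aux

variable {G : Type*} [Group G]

theorem phiConj_refl (φ : G →* G) (a : G) : phiConj ⇑φ a a :=
  ⟨1, by simp⟩

theorem phiConj_symm (φ : G →* G) {a b : G} (h : phiConj ⇑φ a b) : phiConj ⇑φ b a := by
  obtain ⟨γ, rfl⟩ := h
  exact ⟨γ⁻¹, by simp [mul_assoc]⟩

theorem phiConj_trans (φ : G →* G) {a b c : G} (h1 : phiConj ⇑φ a b)
    (h2 : phiConj ⇑φ b c) : phiConj ⇑φ a c := by
  obtain ⟨γ, rfl⟩ := h1
  obtain ⟨δ, rfl⟩ := h2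
  exact ⟨δ * γ, by simp [mul_assoc]⟩

theorem phiConj_equiv (φ : G →* G) : Equivalence (phiConj ⇑φ) :=
  ⟨phiConj_refl φ, phiConj_symm φ, phiConj_trans φ⟩

theorem phiConj_apply (φ : G →* G) (a : G) : phiConj ⇑φ a (φ a) :=
  ⟨a⁻¹, by simp [mul_assoc]⟩

theorem phiConj_iterate (φ : G →* G) (a : G) (n : ℕ) : phiConj ⇑φ a ((⇑φ)^[n] a) := by
  induction n with
  | zero => exact phiConj_refl φ a
  | succ n ih =>
    rw [Function.iterate_succ_apply']
    exact phiConj_trans φ ih (phiConj_apply φ _)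

theorem iterate_conj (φ : G →* G) {a b γ : G} (h : b = γ * a * (φ γ)⁻¹) (n : ℕ) :
    (⇑φ)^[n] b = (⇑φ)^[n] γ * (⇑φ)^[n] a * (φ ((⇑φ)^[n] γ))⁻¹ := by
  induction n with
  | zero => simpa using h
  | succ n ih =>
    rw [Function.iterate_succ_apply', Function.iterate_succ_apply',
      Function.iterate_succ_apply', ih]
    simp

end Aux

/-- if `H ≤ G` with `φ(H) ⊆ H` and every `x ∈ G` eventually lands in `H` under
iteration of `φ`, then the inclusion induces a bijection from `φ_H`-conjugacy classes of `H` to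
`φ`-conjugacy classes of `G`; in particular `R(φ) = R(φ_H)`. -/
theorem stmt12 {G : Type*} [Group G] (φ : G →* G) (H : Subgroup G)
    (hH : ∀ x ∈ H, φ x ∈ H) (φH : H →* H)
    (hres : ∀ x : H, (φH x : G) = φ (x : G))
    (hev : ∀ x : G, ∃ n : ℕ, (⇑φ)^[n] x ∈ H) :
    (∃ e : Quot (phiConj ⇑φH) ≃ Quot (phiConj ⇑φ),
        ∀ x : H, e (Quot.mk _ x) = Quot.mk _ (x : G)) ∧
      reidemeisterNumber ⇑φ = reidemeisterNumber ⇑φH := by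
  -- coercion of iterates
  have hiter : ∀ (n : ℕ) (x : H), ((⇑φH)^[n] x : G) = (⇑φ)^[n] (x : G) := by
    intro n
    induction n with
    | zero => intro x; rfl
    | succ n ih =>
      intro x
      rw [Function.iterate_succ_apply', Function.iterate_succ_apply', hres, ih]
  -- the map
  have hsound : ∀ a b : H, phiConj ⇑φH a b →
      Quot.mk (phiConj ⇑φ) (a : G) = Quot.mk (phiConj ⇑φ) (b : G) := by
    intro a b ⟨γ, hγ⟩
    refine Quot.sound ⟨(γ : G), ?_⟩
    have := congrArg (Subgroup.subtype H) hγ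
    simpa [hres] using this
  let f : Quot (phiConj ⇑φH) → Quot (phiConj ⇑φ) :=
    Quot.lift (fun x : H => Quot.mk (phiConj ⇑φ) (x : G)) hsound
  have hsurj : Function.Surjective f := by
    intro q
    induction q using Quot.ind with
    | _ x =>
      obtain ⟨n, hn⟩ := hev x
      refine ⟨Quot.mk _ (⟨(⇑φ)^[n] x, hn⟩ : H), ?_⟩
      exact (Quot.sound (phiConj_symm φ (phiConj_iterate φ x n)))
  have hinj : Function.Injective f := by
    intro p q
    induction p using Quot.ind with
    | _ x =>
      induction q using Quot.ind with
      | _ y =>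
        intro hpq
        have hxy : phiConj ⇑φ (x : G) (y : G) := by
          have := (Quot.eq.mp hpq)
          exact ((phiConj_equiv φ).eqvGen_iff).mp this
        obtain ⟨γ, hγ⟩ := hxy
        obtain ⟨n, hn⟩ := hev γ
        -- in H : φH^[n] x conjugate to φH^[n] y
        have key : phiConj ⇑φH ((⇑φH)^[n] x) ((⇑φH)^[n] y) := by
          refine ⟨⟨(⇑φ)^[n] γ, hn⟩, ?_⟩
          apply Subtype.ext
          push_cast
          rw [hres, hiter, hiter]
          exact iterate_conj φ hγ n
        apply Quot.sound
        exact phiConj_trans φH (phiConj_iterate φH x n)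
          (phiConj_trans φH key (phiConj_symm φH (phiConj_iterate φH y n)))
  refine ⟨⟨Equiv.ofBijective f ⟨hinj, hsurj⟩, fun x => rfl⟩, ?_⟩
  exact Nat.card_congr (Equiv.ofBijective f ⟨hinj, hsurj⟩).symm
end

section
/- Let φ : G → G be an endomorphism of a group G and n ∈ ℕ. Let H = φⁿ(G) be the image subgroup of φⁿ. Then R(φ) = R(φ_H), where φ_H : H → H is the restriction of φ to H; more precisely, the φ_H-conjugacy classes of H are in bijection with the φ-conjugacy classes of G via inclusion. -/
/-! Every `g` is `φ`-conjugate to `φ g` (take `γ = g⁻¹`), hence to `φⁿ g ∈ H`: so every class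
meets `H`. Conversely, if `a, b ∈ H` are `φ`-conjugate in `G` by `γ`, applying `φⁿ` shows that
`φⁿ a` and `φⁿ b` are `φ`-conjugate by `φⁿ γ ∈ H`, i.e. already inside `H`; and `a`, `b` are
`φ_H`-conjugate to `φⁿ a`, `φⁿ b`. -/

section

variable {G K : Type*} [Group G] [Group K]

theorem phiConj_equivalence (φ : G →* G) : Equivalence (phiConj φ) where
  refl a := ⟨1, by simp⟩
  symm := by
    rintro a b ⟨γ, rfl⟩
    exact ⟨γ⁻¹, by rw [map_inv]; group⟩
  trans := by
    rintro a b c ⟨γ₁, rfl⟩ ⟨γ₂, rfl⟩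
    exact ⟨γ₂ * γ₁, by rw [map_mul]; group⟩

theorem phiConj_self_apply (φ : G →* G) (a : G) : phiConj φ a (φ a) :=
  ⟨a⁻¹, by simp⟩

theorem phiConj_self_iterate (φ : G →* G) (a : G) (n : ℕ) : phiConj φ a (φ^[n] a) := by
  induction n with
  | zero => exact (phiConj_equivalence φ).refl a
  | succ k ih =>
    rw [Function.iterate_succ_apply']
    exact (phiConj_equivalence φ).trans ih (phiConj_self_apply φ _)

theorem phiConj.map {φ : G → G} {ψ : K → K} (f : G →* K) (hf : Function.Semiconj f φ ψ)
    {a b : G} : phiConj φ a b → phiConj ψ (f a) (f b) := by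
  rintro ⟨γ, rfl⟩
  exact ⟨f γ, by rw [map_mul, map_mul, map_inv, hf]⟩

theorem bijective_quotMap_phiConj_subtype (φ : Monoid.End G) (H : Subgroup G) (φH : H →* H)
    (hres : ∀ x : H, (φH x : G) = φ x) (n : ℕ) (hn : ∀ g, (φ ^ n) g ∈ H) :
    Function.Bijective
      (Quot.map Subtype.val fun _ _ => phiConj.map H.subtype hres :
        Quot (phiConj φH) → Quot (phiConj φ)) := by
  have hresn : ∀ x : H, ((φH^[n] x : H) : G) = (φ ^ n) x :=
    Function.Semiconj.iterate_right (f := Subtype.val) hres n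
  set π : G →* H := (φ ^ n).codRestrict H hn
  have hπ : Function.Semiconj π φ φH := fun g => Subtype.ext <| by
    rw [hres]
    exact (Function.Commute.self_iterate φ n g).symm
  have hπ_val : ∀ x : H, π x = φH^[n] x := fun x => Subtype.ext (hresn x).symm
  constructor
  · rintro ⟨x⟩ ⟨y⟩ hxy
    have hG : phiConj φ x y :=
      (Equivalence.eqvGen_iff (phiConj_equivalence φ)).mp (Quot.eq.mp hxy)
    have hH : phiConj φH (π x) (π y) := phiConj.map π hπ hG
    rw [hπ_val, hπ_val] at hH
    have e := phiConj_equivalence φH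
    exact Quot.sound <| e.trans (phiConj_self_iterate φH x n)
      (e.trans hH (e.symm (phiConj_self_iterate φH y n)))
  · rintro ⟨g⟩
    exact ⟨Quot.mk _ (π g), Quot.sound <|
      (phiConj_equivalence φ).symm (phiConj_self_iterate (φ : G →* G) g n)⟩

end

/-- for `H = φⁿ(G)` the image subgroup of `φⁿ` and `φ_H` the restriction of `φ`
to `H`, the inclusion induces a bijection from `φ_H`-conjugacy classes of `H` to `φ`-conjugacy
classes of `G`; in particular `R(φ) = R(φ_H)`. -/
theorem stmt13 {G : Type*} [Group G] (φ : Monoid.End G) (n : ℕ)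
    (φH : MonoidHom.range (φ ^ n) →* MonoidHom.range (φ ^ n))
    (hres : ∀ x : MonoidHom.range (φ ^ n), (φH x : G) = φ (x : G)) :
    (∃ e : Quot (phiConj ⇑φH) ≃ Quot (phiConj ⇑φ),
        ∀ x : MonoidHom.range (φ ^ n), e (Quot.mk _ x) = Quot.mk _ (x : G)) ∧
      reidemeisterNumber ⇑φ = reidemeisterNumber ⇑φH := by
  have hbij := bijective_quotMap_phiConj_subtype φ _ φH hres n fun g => ⟨g, rfl⟩
  let e := Equiv.ofBijective _ hbij
  exact ⟨⟨e, fun _ => rfl⟩, Nat.card_congr e.symm⟩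
end

section
/- Let X be a set, g : X → X a map, and n ≥ 1 a natural number such that the fixed point set Fix(g^d) = {x ∈ X : g^d(x) = x} is finite for every divisor d of n. Then n divides Σ_{d|n} μ(d) · #Fix(g^{n/d}), where μ is the Möbius function. -/
/-!
`Fix(g^m)` is the disjoint union, over `i ∣ m`, of the points of least period `i`, so Möbius
inversion turns the sum into the number of points of least period `n`. Those points fall into
periodic orbits of exactly `n` points each, so `n` divides their number.
-/

open Function Finset

theorem Finset.dvd_card_of_card_fiber_eq {ι M : Type*} [DecidableEq M] {s : Finset ι}
    (f : ι → M) {n : ℕ} (h : ∀ a ∈ s, #{b ∈ s | f b = f a} = n) : n ∣ #s := by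
  rw [card_eq_sum_card_image f s, sum_const_nat]
  · exact dvd_mul_left n _
  · intro b hb
    obtain ⟨a, ha, rfl⟩ := mem_image.1 hb
    exact h a ha

theorem Cycle.mem_toFinset {α : Type*} [DecidableEq α] {s : Cycle α} {a : α} :
    a ∈ s.toFinset ↔ a ∈ s :=
  Quotient.inductionOn' s fun _ ↦ List.mem_toFinset

namespace Function

variable {α : Type*} {f : α → α} {x y : α}

theorem periodicOrbit_eq_iff_mem_periodicOrbit (hx : x ∈ periodicPts f)
    (hy : y ∈ periodicPts f) : periodicOrbit f y = periodicOrbit f x ↔ y ∈ periodicOrbit f x := by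
  refine ⟨fun h ↦ h ▸ self_mem_periodicOrbit hy, fun h ↦ ?_⟩
  obtain ⟨k, rfl⟩ := (mem_periodicOrbit_iff hx).1 h
  exact periodicOrbit_apply_iterate_eq hx k

theorem card_toFinset_periodicOrbit [DecidableEq α] :
    #(periodicOrbit f x).toFinset = minimalPeriod f x := by
  have hnodup : ((List.range (minimalPeriod f x)).map fun k ↦ f^[k] x).Nodup :=
    Cycle.nodup_coe_iff.1 nodup_periodicOrbit
  rw [← periodicOrbit_length, periodicOrbit_def, Cycle.coe_toFinset, Cycle.length_coe,
    List.toFinset_card_of_nodup hnodup]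

theorem minimalPeriod_eq_of_mem_periodicOrbit (hx : x ∈ periodicPts f)
    (hy : y ∈ periodicOrbit f x) : minimalPeriod f y = minimalPeriod f x := by
  obtain ⟨k, rfl⟩ := (mem_periodicOrbit_iff hx).1 hy
  exact minimalPeriod_apply_iterate hx k

theorem dvd_card_minimalPeriod_eq {n : ℕ} (hn : 0 < n) :
    n ∣ Nat.card {x // minimalPeriod f x = n} := by
  classical
  obtain hfin | _ := finite_or_infinite {x // minimalPeriod f x = n}
  swap
  · rw [Nat.card_eq_zero_of_infinite]
    exact dvd_zero n
  have hS : {x | minimalPeriod f x = n}.Finite := Set.finite_coe_iff.1 hfin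
  have hper : ∀ x ∈ hS.toFinset, x ∈ periodicPts f := fun x hx ↦ by
    rw [Set.Finite.mem_toFinset, Set.mem_ofPred_eq] at hx
    exact minimalPeriod_pos_iff_mem_periodicPts.1 (hx ▸ hn)
  rw [← Set.coe_ofPred, Nat.card_eq_card_finite_toFinset hS]
  refine dvd_card_of_card_fiber_eq (periodicOrbit f) fun x hx ↦ ?_
  have hfiber : {y ∈ hS.toFinset | periodicOrbit f y = periodicOrbit f x} =
      (periodicOrbit f x).toFinset := by
    ext y
    simp only [mem_filter, Cycle.mem_toFinset]
    refine ⟨fun ⟨hy, h⟩ ↦ (periodicOrbit_eq_iff_mem_periodicOrbit (hper x hx) (hper y hy)).1 h,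
      fun hy ↦ ?_⟩
    have hyS : y ∈ hS.toFinset := by
      simpa [minimalPeriod_eq_of_mem_periodicOrbit (hper x hx) hy] using hx
    exact ⟨hyS, (periodicOrbit_eq_iff_mem_periodicOrbit (hper x hx) (hper y hyS)).2 hy⟩
  rw [hfiber, card_toFinset_periodicOrbit]
  simpa using hx

theorem card_fixedPoints_iterate_eq_sum {m : ℕ} (hm : 0 < m)
    (hfin : {x | f^[m] x = x}.Finite) :
    Nat.card {x // f^[m] x = x} = ∑ i ∈ m.divisors, Nat.card {x // minimalPeriod f x = i} := by
  classical
  rw [← Set.coe_ofPred, Nat.card_eq_card_finite_toFinset hfin,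
    card_eq_sum_card_fiberwise (f := minimalPeriod f) (t := m.divisors) ?_]
  · refine sum_congr rfl fun i hi ↦ ?_
    rw [← Nat.card_eq_finsetCard]
    refine Nat.card_congr (Equiv.subtypeEquivRight fun x ↦ ?_)
    rw [mem_filter, Set.Finite.mem_toFinset, Set.mem_ofPred_eq]
    exact and_iff_right_of_imp fun h ↦
      (h ▸ isPeriodicPt_minimalPeriod f x).trans_dvd (Nat.dvd_of_mem_divisors hi)
  · intro x hx
    exact Nat.mem_divisors.2 ⟨IsPeriodicPt.minimalPeriod_dvd (hfin.mem_toFinset.1 hx), hm.ne'⟩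

end Function

/-- if `g : X → X` and `Fix(g^d)` is finite for every divisor `d` of `n ≥ 1`,
then `n` divides `∑_{d ∣ n} μ(d) · #Fix(g^{n/d})`. -/
theorem stmt14 {X : Type*} (g : X → X) (n : ℕ) (hn : 1 ≤ n)
    (hfin : ∀ d, d ∣ n → {x : X | g^[d] x = x}.Finite) :
    (n : ℤ) ∣ ∑ d ∈ n.divisors,
      ArithmeticFunction.moebius d * (Nat.card {x : X // g^[n / d] x = x} : ℤ) := by
  have hinversion : ∑ d ∈ n.divisors,
      ArithmeticFunction.moebius d * (Nat.card {x : X // g^[n / d] x = x} : ℤ) =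
        Nat.card {x // minimalPeriod g x = n} := by
    have h := (ArithmeticFunction.sum_eq_iff_sum_mul_moebius_eq_on (R := ℤ)
      (f := fun m ↦ (Nat.card {x // minimalPeriod g x = m} : ℤ))
      (g := fun m ↦ (Nat.card {x // g^[m] x = x} : ℤ))
      {d | d ∣ n} (fun _ _ hab hb ↦ hab.trans hb)).1
      (fun m hm hmn ↦ by exact_mod_cast (card_fixedPoints_iterate_eq_sum hm (hfin m hmn)).symm)
      n hn dvd_rfl
    simpa only [Int.cast_id, Nat.sum_divisorsAntidiagonal (fun a b ↦
      (ArithmeticFunction.moebius a : ℤ) * (Nat.card {x // g^[b] x = x} : ℤ))] using h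
  rw [hinversion]
  exact_mod_cast dvd_card_minimalPeriod_eq hn
end
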